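/- Let A ∈ ℝ^{n×n}, B ∈ ℝ^{n×m}, and suppose (A,B) is controllable with B ≠ 0. Define recursively Φ₀ = A, Γ₀ = B, and, as long as Γ_j does not have full row rank and Γ_j ≠ 0, let Γ_j = U_{j+1}[Σ_j 0; 0 0]H_{j+1}ᵀ be an SVD with Σ_j invertible, U_{j+1} = [Ũ_{j+1} Ū_{j+1}], and set Φ_{j+1} = Ū_{j+1}ᵀ Φ_j Ū_{j+1}, Γ_{j+1} = Ū_{j+1}ᵀ Φ_j Ũ_{j+1}. Then the recursion terminates: there exists a finite l such that Γ_l has full row rank, and for every 0 ≤ j ≤ l the pair (Φ_j, Γ_j) is controllable. -/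

import Mathlib

/-!
Controllability is handled through the eigenvector form of the PBH test. If `z` is a left
eigenvector of `Ūᵀ Φ Ū` with `z Ūᵀ Φ Ũ = 0`, then `w = z Ūᵀ` is a left eigenvector of `Φ`
(split `w Φ` along `Ũ Ũᵀ + Ū Ūᵀ = 1`) with `w Γ = 0`, because the columns of `Γ = Ũ Σ W`
lie in the span of those of `Ũ`; so `w = 0` and `z = w Ū = 0`. Thus every pair of the recursion is
controllable. A controllable pair of positive state dimension has `Γ ≠ 0`, since over `ℂ` the
state matrix has a left eigenvector; hence `rank Γ_j > 0` and each step strictly lowers the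
state dimension, so the recursion stops.
-/

open Matrix

/-- PBH test for controllability of the pair `(Φ, Γ)`. -/
def PBHControllable {k m : Type*} [Fintype k] [Fintype m] [DecidableEq k]
    (Φ : Matrix k k ℝ) (Γ : Matrix k m ℝ) : Prop :=
  ∀ lam : ℂ,
    (Matrix.fromCols (lam • (1 : Matrix k k ℂ) - Φ.map (fun a => (a : ℂ)))
      (Γ.map (fun a => (a : ℂ)))).rank = Fintype.card k

namespace Matrix

variable {K : Type*} [Field K] {k m : Type*} [Fintype k] [Fintype m]

theorem rank_eq_card_height_iff {M : Matrix k m K} :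
    M.rank = Fintype.card k ↔ ∀ v, v ᵥ* M = 0 → v = 0 := by
  rw [M.rank_eq_finrank_span_row, eq_comm, ← Set.finrank,
    ← linearIndependent_iff_card_eq_finrank_span, ← vecMul_injective_iff, ← coe_vecMulLinear,
    injective_iff_map_eq_zero]
  rfl

theorem rank_pos_of_ne_zero {M : Matrix k m K} (hM : M ≠ 0) : 0 < M.rank := by
  rw [Nat.pos_iff_ne_zero, rank_eq_finrank_span_cols, Ne, Submodule.finrank_eq_zero,
    Submodule.span_eq_bot]
  contrapose! hM
  ext i j
  exact congrFun (hM _ ⟨j, rfl⟩) i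

end Matrix

section EigenvectorTest

variable {K : Type*} [Field K] {k m p q : Type*} [Fintype k]

def PBHEigenvectorTest (A : Matrix k k K) (G : Matrix k m K) : Prop :=
  ∀ (lam : K) (w : k → K), w ᵥ* A = lam • w → w ᵥ* G = 0 → w = 0

theorem PBHEigenvectorTest.ne_zero [IsAlgClosed K] [Nonempty k] {A : Matrix k k K}
    {G : Matrix k m K} (h : PBHEigenvectorTest A G) : G ≠ 0 := by
  rintro rfl
  obtain ⟨lam, hlam⟩ := Module.End.exists_eigenvalue (mulVecLin Aᵀ)
  obtain ⟨w, hw⟩ := hlam.exists_hasEigenvector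
  refine hw.2 (h lam w ?_ (vecMul_zero w))
  simpa [mulVec_transpose] using hw.apply_eq_smul

variable [DecidableEq k]

theorem rank_fromCols_smul_one_sub_eq_card_iff [Fintype m] (A : Matrix k k K)
    (G : Matrix k m K) (lam : K) :
    (fromCols (lam • (1 : Matrix k k K) - A) G).rank = Fintype.card k ↔
      ∀ w : k → K, w ᵥ* A = lam • w → w ᵥ* G = 0 → w = 0 := by
  rw [rank_eq_card_height_iff]
  refine forall_congr' fun w => ?_
  rw [vecMul_fromCols, vecMul_sub, vecMul_smul, vecMul_one, ← Sum.elim_zero_zero,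
    Sum.elim_eq_iff, sub_eq_zero, eq_comm, and_imp]

theorem PBHEigenvectorTest.compress [Fintype p] [Fintype q] [DecidableEq q]
    {A : Matrix k k K} {G : Matrix k m K} {T : Matrix k p K} {B : Matrix k q K}
    {X : Matrix p m K} (hBB : Bᵀ * B = 1) (hTB : Tᵀ * B = 0) (hTB_sum : T * Tᵀ + B * Bᵀ = 1)
    (hG : G = T * X) (h : PBHEigenvectorTest A G) :
    PBHEigenvectorTest (Bᵀ * A * B) (Bᵀ * A * T) := by
  intro lam z hzA hzT
  set w := z ᵥ* Bᵀ
  have hwA : w ᵥ* A = lam • w :=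
    calc w ᵥ* A = (w ᵥ* A) ᵥ* (T * Tᵀ + B * Bᵀ) := by rw [hTB_sum, vecMul_one]
      _ = (z ᵥ* (Bᵀ * A * T)) ᵥ* Tᵀ + (z ᵥ* (Bᵀ * A * B)) ᵥ* Bᵀ := by
        simp only [w, vecMul_add, vecMul_vecMul, Matrix.mul_assoc]
      _ = lam • w := by rw [hzT, hzA, zero_vecMul, zero_add, smul_vecMul]
  have hBT : Bᵀ * T = 0 := by simpa using congrArg transpose hTB
  have hwG : w ᵥ* G = 0 := by
    rw [hG, vecMul_vecMul, ← Matrix.mul_assoc, hBT, Matrix.zero_mul, vecMul_zero]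
  calc z = z ᵥ* (Bᵀ * B) := by rw [hBB, vecMul_one]
    _ = w ᵥ* B := (vecMul_vecMul _ _ _).symm
    _ = 0 := by rw [h lam w hwA hwG, zero_vecMul]

end EigenvectorTest

section PBHControllable

variable {k m p q : Type*} [Fintype k] [Fintype m] [DecidableEq k]
  {Φ : Matrix k k ℝ} {Γ : Matrix k m ℝ}

theorem pbhControllable_iff :
    PBHControllable Φ Γ ↔
      PBHEigenvectorTest (Φ.map Complex.ofRealHom) (Γ.map Complex.ofRealHom) :=
  forall_congr' fun lam => rank_fromCols_smul_one_sub_eq_card_iff _ _ lam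

theorem PBHControllable.ne_zero [Nonempty k] (h : PBHControllable Φ Γ) : Γ ≠ 0 := by
  rintro rfl
  exact (pbhControllable_iff.mp h).ne_zero (Matrix.map_zero _ (map_zero _))

theorem PBHControllable.compress [Fintype p] [Fintype q] [DecidableEq q]
    {T : Matrix k p ℝ} {B : Matrix k q ℝ} {X : Matrix p m ℝ} (hBB : Bᵀ * B = 1)
    (hTB : Tᵀ * B = 0) (hTB_sum : T * Tᵀ + B * Bᵀ = 1) (hΓ : Γ = T * X)
    (h : PBHControllable Φ Γ) : PBHControllable (Bᵀ * Φ * B) (Bᵀ * Φ * T) := by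
  rw [pbhControllable_iff] at h ⊢
  simp only [Matrix.map_mul, transpose_map]
  refine h.compress (X := X.map Complex.ofRealHom) ?_ ?_ ?_ ?_
  · simpa [Matrix.map_mul, transpose_map] using congrArg (Matrix.map · Complex.ofRealHom) hBB
  · simpa [Matrix.map_mul, transpose_map] using congrArg (Matrix.map · Complex.ofRealHom) hTB
  · simpa [Matrix.map_mul, Matrix.map_add, transpose_map] using
      congrArg (Matrix.map · Complex.ofRealHom) hTB_sum
  · simpa [Matrix.map_mul, transpose_map] using congrArg (Matrix.map · Complex.ofRealHom) hΓ

end PBHControllable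

theorem exists_stop_of_decreasing_measure {P Q : ℕ → Prop} (k : ℕ → ℕ) (h0 : P 0)
    (hstep : ∀ j, P j → ¬Q j → P (j + 1) ∧ k (j + 1) < k j) :
    ∃ l, Q l ∧ ∀ j ≤ l, P j := by
  classical
  by_cases hQ : ∃ l, Q l
  · refine ⟨Nat.find hQ, Nat.find_spec hQ, fun j hj => ?_⟩
    induction j with
    | zero => exact h0
    | succ j ih => exact (hstep j (ih (by omega)) (Nat.find_min hQ (by omega))).1
  · simp only [not_exists] at hQ
    have descent : ∀ j, P j ∧ k j + j ≤ k 0 := by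
      intro j
      induction j with
      | zero => exact ⟨h0, le_rfl⟩
      | succ j ih =>
        obtain ⟨hP, hk⟩ := hstep j ih.1 (hQ j)
        exact ⟨hP, by omega⟩
    have := (descent (k 0 + 1)).2
    omega

/-- `Ut`, `Ub`, `S` stand for `Ũ_{j+1}`, `Ū_{j+1}`, `Σ_j`, and the SVD of `Γ_j` is taken in thin
form `Γ_j = Ũ Σ W` with `W = [I 0] Hᵀ`. -/
theorem svd_recursion_terminates_general (k p : ℕ → ℕ)
    (Φ : ∀ j, Matrix (Fin (k j)) (Fin (k j)) ℝ)
    (Γ : ∀ j, Matrix (Fin (k j)) (Fin (p j)) ℝ)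
    (hctrb0 : PBHControllable (Φ 0) (Γ 0))
    (hstep : ∀ j, (Γ j).rank < k j → Γ j ≠ 0 →
      p (j + 1) = (Γ j).rank ∧ k (j + 1) + p (j + 1) = k j ∧
      ∃ (Ut : Matrix (Fin (k j)) (Fin (p (j + 1))) ℝ)
        (Ub : Matrix (Fin (k j)) (Fin (k (j + 1))) ℝ)
        (S : Matrix (Fin (p (j + 1))) (Fin (p (j + 1))) ℝ)
        (W : Matrix (Fin (p (j + 1))) (Fin (p j)) ℝ),
        Utᵀ * Ut = 1 ∧ Ubᵀ * Ub = 1 ∧ Utᵀ * Ub = 0 ∧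
        Ut * Utᵀ + Ub * Ubᵀ = 1 ∧
        (∃ d, S = Matrix.diagonal d) ∧ IsUnit S ∧ W * Wᵀ = 1 ∧
        Γ j = Ut * S * W ∧
        Φ (j + 1) = Ubᵀ * Φ j * Ub ∧ Γ (j + 1) = Ubᵀ * Φ j * Ut) :
    ∃ l, (Γ l).rank = k l ∧ ∀ j ≤ l, PBHControllable (Φ j) (Γ j) := by
  refine exists_stop_of_decreasing_measure k hctrb0 fun j hctrb hfull => ?_
  have hlt : (Γ j).rank < k j := (Γ j).rank_le_height.lt_of_ne hfull
  have : Nonempty (Fin (k j)) := Fin.pos_iff_nonempty.mp (by omega)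
  have hne : Γ j ≠ 0 := hctrb.ne_zero
  obtain ⟨hp, hk, Ut, Ub, S, W, -, hUbUb, hUtUb, hsum, -, -, -, hfac, hΦ, hΓ⟩ :=
    hstep j hlt hne
  refine ⟨?_, ?_⟩
  · rw [hΦ, hΓ]
    exact hctrb.compress hUbUb hUtUb hsum (hfac.trans (Matrix.mul_assoc _ _ _))
  · have := rank_pos_of_ne_zero hne
    omega

/-- the repeated-SVD recursion `Φ₀ = A, Γ₀ = B`,
`Φ_{j+1} = Ū_{j+1}ᵀ Φ_j Ū_{j+1}`, `Γ_{j+1} = Ū_{j+1}ᵀ Φ_j Ũ_{j+1}` terminates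
with a `Γ_l` of full row rank, and every intermediate pair `(Φ_j, Γ_j)` is
controllable.  The state dimensions are `k j` and input dimensions `p j`;
the SVD of `Γ_j` is written in thin form `Γ_j = Ũ Σ W` with `Σ` invertible
diagonal, `Ũ` the orthonormal left singular columns, `W = [I 0] Hᵀ` having
orthonormal rows. -/
theorem svd_recursion_terminates (n m : ℕ) (k p : ℕ → ℕ)
    (hk0 : k 0 = n) (hp0 : p 0 = m)
    (Φ : ∀ j, Matrix (Fin (k j)) (Fin (k j)) ℝ)
    (Γ : ∀ j, Matrix (Fin (k j)) (Fin (p j)) ℝ)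
    (hB0 : Γ 0 ≠ 0)
    (hctrb0 : PBHControllable (Φ 0) (Γ 0))
    (hstep : ∀ j, (Γ j).rank < k j → Γ j ≠ 0 →
      p (j + 1) = (Γ j).rank ∧ k (j + 1) + p (j + 1) = k j ∧
      ∃ (Ut : Matrix (Fin (k j)) (Fin (p (j + 1))) ℝ)
        (Ub : Matrix (Fin (k j)) (Fin (k (j + 1))) ℝ)
        (S : Matrix (Fin (p (j + 1))) (Fin (p (j + 1))) ℝ)
        (W : Matrix (Fin (p (j + 1))) (Fin (p j)) ℝ),
        Utᵀ * Ut = 1 ∧ Ubᵀ * Ub = 1 ∧ Utᵀ * Ub = 0 ∧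
        Ut * Utᵀ + Ub * Ubᵀ = 1 ∧
        (∃ d, S = Matrix.diagonal d) ∧ IsUnit S ∧ W * Wᵀ = 1 ∧
        Γ j = Ut * S * W ∧
        Φ (j + 1) = Ubᵀ * Φ j * Ub ∧ Γ (j + 1) = Ubᵀ * Φ j * Ut) :
    ∃ l, (Γ l).rank = k l ∧ ∀ j ≤ l, PBHControllable (Φ j) (Γ j) :=
  svd_recursion_terminates_general k p Φ Γ hctrb0 hstep
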